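/- Let φ ∈ L¹(ℝ²) ∩ L²(ℝ²) and let k, l ∈ ℤ. Then for a.e. ξ, ξ' ∈ [0,1) and η ∈ ℝ, the Weyl–Zak transform of the twisted translate satisfies Z_W (T^t_{(k,l)} φ)(ξ, ξ', η) = e^{2πi(k ξ + l ξ')} e^{πi k l} Z_W φ(ξ, ξ', η). -/

import Mathlib

/-!
Substituting `x ↦ x + k` in the kernel integral shows
`K_{T^t_{(k,l)} φ}(ξ, η) = e^{πikl} e^{2πikξ} K_φ(ξ + l, η)`. In the Zak series, reindexing
`m ↦ m - l` then turns each term of `Z_W(T^t_{(k,l)} φ)` into the corresponding term of `Z_W φ`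
times `e^{2πi(kξ + lξ')} e^{πikl}`, up to the trivial phase `e^{2πik(m-l)}`.
-/

open MeasureTheory Complex

noncomputable section

/-- The `λ`-twisted translation `(T^t_{(k,l)})^λ f (x,y) = e^{πiλ(xl - yk)} f(x-k, y-l)`. -/
def twistedTranslate (lam : ℝ) (k l : ℤ) (f : ℝ × ℝ → ℂ) : ℝ × ℝ → ℂ :=
  fun p => Complex.exp ((↑(Real.pi * lam * (p.1 * l - p.2 * k)) : ℂ) * Complex.I) *
    f (p.1 - k, p.2 - l)

/-- The dilation `D_a f (x,y) = a f(ax, ay)`. -/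
def dilate (a : ℝ) (f : ℝ × ℝ → ℂ) : ℝ × ℝ → ℂ :=
  fun p => (a : ℂ) * f (a * p.1, a * p.2)

/-- The kernel `K^λ_g(ξ,η) = ∫_ℝ g(x, η-ξ) e^{πiλx(η+ξ)} dx` of the Weyl transform `W_λ(g)`. -/
def weylKernel (lam : ℝ) (g : ℝ × ℝ → ℂ) (ξ η : ℝ) : ℂ :=
  ∫ x : ℝ, g (x, η - ξ) * Complex.exp ((↑(Real.pi * lam * x * (η + ξ)) : ℂ) * Complex.I)

/-- The Weyl–Zak transform `Z_W φ(ξ, ξ', η) = Σ_{m∈ℤ} K_φ(m + ξ, η) e^{-2πimξ'}`. -/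
def weylZak (φ : ℝ × ℝ → ℂ) (ξ ξ' η : ℝ) : ℂ :=
  ∑' m : ℤ, weylKernel 1 φ (m + ξ) η *
    Complex.exp (-(↑(2 * Real.pi * (m : ℝ) * ξ') : ℂ) * Complex.I)

theorem weylKernel_twistedTranslate (lam : ℝ) (φ : ℝ × ℝ → ℂ) (k l : ℤ) (ξ η : ℝ) :
    weylKernel lam (twistedTranslate lam k l φ) ξ η =
      exp (↑(Real.pi * lam * k * l) * I) * exp (↑(2 * Real.pi * lam * k * ξ) * I) *
        weylKernel lam φ (ξ + l) η := by
  unfold weylKernel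
  -- substituting `x ↦ x + k`, the phases combine to `πλ(kl + 2kξ + x(η + ξ + l))`
  rw [← integral_add_right_eq_self _ (k : ℝ), ← integral_const_mul]
  congr 1 with x
  simp only [twistedTranslate, add_sub_cancel_right, sub_sub]
  rw [← mul_assoc, ← exp_add, mul_right_comm, ← exp_add, mul_right_comm _ (φ _), ← exp_add]
  congr 2
  push_cast
  ring

theorem weylZak_twistedTranslate (φ : ℝ × ℝ → ℂ) (k l : ℤ) (ξ ξ' η : ℝ) :
    weylZak (twistedTranslate 1 k l φ) ξ ξ' η =
      exp (↑(2 * Real.pi * (k * ξ + l * ξ')) * I) * exp (↑(Real.pi * k * l) * I) *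
        weylZak φ ξ ξ' η := by
  unfold weylZak
  rw [← tsum_mul_left, ← (Equiv.subRight l).tsum_eq]
  refine tsum_congr fun m => ?_
  simp only [weylKernel_twistedTranslate, Equiv.subRight_apply, mul_one]
  rw [show ((m - l : ℤ) : ℝ) + ξ + l = m + ξ by push_cast; ring]
  -- the two phases differ by `e^{2πik(m-l)} = 1`
  have phase : exp (↑(Real.pi * k * l) * I) * exp (↑(2 * Real.pi * k * ((m - l : ℤ) + ξ)) * I) *
      exp (-↑(2 * Real.pi * (m - l : ℤ) * ξ') * I) =
      exp (↑(2 * Real.pi * (k * ξ + l * ξ')) * I) * exp (↑(Real.pi * k * l) * I) *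
        exp (-↑(2 * Real.pi * m * ξ') * I) := by
    simp only [← exp_add]
    exact exp_eq_exp_iff_exists_int.2 ⟨k * (m - l), by push_cast; ring⟩
  linear_combination weylKernel 1 φ (m + ξ) η * phase

theorem statement_17_general (φ : ℝ × ℝ → ℂ) (k l : ℤ) :
    ∀ᵐ p : ℝ × ℝ × ℝ, p.1 ∈ Set.Ico (0 : ℝ) 1 → p.2.1 ∈ Set.Ico (0 : ℝ) 1 →
      weylZak (twistedTranslate 1 k l φ) p.1 p.2.1 p.2.2 =
        Complex.exp ((↑(2 * Real.pi * ((k : ℝ) * p.1 + (l : ℝ) * p.2.1)) : ℂ) * Complex.I) *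
          Complex.exp ((↑(Real.pi * (k : ℝ) * l) : ℂ) * Complex.I) *
          weylZak φ p.1 p.2.1 p.2.2 :=
  Filter.Eventually.of_forall fun p _ _ => weylZak_twistedTranslate φ k l p.1 p.2.1 p.2.2

/-- For `φ ∈ L¹(ℝ²) ∩ L²(ℝ²)` and `k, l ∈ ℤ`, for a.e. `ξ, ξ' ∈ [0,1)` and
`η ∈ ℝ`, `Z_W(T^t_{(k,l)} φ)(ξ, ξ', η) = e^{2πi(kξ + lξ')} e^{πikl} Z_W φ(ξ, ξ', η)`. -/
theorem statement_17 (φ : ℝ × ℝ → ℂ) (hφ1 : Integrable φ (volume : Measure (ℝ × ℝ)))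
    (hφ2 : MemLp φ 2 (volume : Measure (ℝ × ℝ))) (k l : ℤ) :
    ∀ᵐ p : ℝ × ℝ × ℝ, p.1 ∈ Set.Ico (0 : ℝ) 1 → p.2.1 ∈ Set.Ico (0 : ℝ) 1 →
      weylZak (twistedTranslate 1 k l φ) p.1 p.2.1 p.2.2 =
        Complex.exp ((↑(2 * Real.pi * ((k : ℝ) * p.1 + (l : ℝ) * p.2.1)) : ℂ) * Complex.I) *
          Complex.exp ((↑(Real.pi * (k : ℝ) * l) : ℂ) * Complex.I) *
          weylZak φ p.1 p.2.1 p.2.2 :=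
  statement_17_general φ k l
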